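/- arXiv:1303.5145 — 2 statements merged into one kernel-verified Lean document; each statement's English description precedes it below -/
import Mathlib

section
/- Let q ∈ [1,∞], K ≥ 2, n₁,…,n_K > 0, λ₁, λ₂ ≥ 0, let S¹,…,Sᴷ be symmetric p×p real matrices, let (I₁,…,I_L) be a partition of {1,…,p}, and let T = ∪_{l=1}^L I_l × I_l. If n_k|Sᵏ_{ij}| ≤ λ₁ for all (i,j) ∈ T^c and all k = 1,…,K, then every K-tuple (Θ̂¹,…,Θ̂ᴷ) of symmetric positive definite p×p matrices minimizing the PNJGL objective F(Θ¹,…,Θᴷ) = Σ_{k=1}^K n_k(−log det Θᵏ + trace(SᵏΘᵏ)) + λ₁ Σ_{k=1}^K Σ_{i,j}|Θᵏ_{ij}| + λ₂ Σ_{k<k'} Ω_q(Θᵏ − Θᵏ') over all K-tuples of symmetric positive definite matrices has the property that each Θ̂ᵏ is supported on T. -/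
open Matrix
open scoped ENNReal BigOperators

/-- The ℓ_q norm of a finitely-indexed real vector, for q ∈ [0,∞]
(the maximum absolute entry when q = ∞). -/
noncomputable def lqNorm (q : ℝ≥0∞) {ι : Type*} [Fintype ι] (x : ι → ℝ) : ℝ :=
  ‖(WithLp.equiv q (ι → ℝ)).symm x‖

/-- The row-column overlap norm Ω_q of a K-tuple of p×p real matrices:
the infimum of Σ_j ‖([V¹;…;Vᴷ])_j‖_q over all decompositions Θᵏ = Vᵏ + (Vᵏ)ᵀ. -/
noncomputable def rcon (q : ℝ≥0∞) (K p : ℕ)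
    (Θ : Fin K → Matrix (Fin p) (Fin p) ℝ) : ℝ :=
  sInf { r : ℝ | ∃ V : Fin K → Matrix (Fin p) (Fin p) ℝ,
    (∀ k, Θ k = V k + (V k)ᵀ) ∧
    r = ∑ j : Fin p, lqNorm q (fun ki : Fin K × Fin p => V ki.1 ki.2 j) }

/-- The row-column overlap norm Ω_q of a single p×p matrix (the case K = 1). -/
noncomputable def rcon1 (q : ℝ≥0∞) {p : ℕ} (Θ : Matrix (Fin p) (Fin p) ℝ) : ℝ :=
  sInf { r : ℝ | ∃ V : Matrix (Fin p) (Fin p) ℝ,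
    Θ = V + Vᵀ ∧ r = ∑ j : Fin p, lqNorm q (fun i => V i j) }

/-- The PNJGL objective for K precision matrices:
Σ_k n_k(−log det Θᵏ + trace(SᵏΘᵏ)) + λ₁ Σ_k Σ_{i,j}|Θᵏ_{ij}|
  + λ₂ Σ_{k<k'} Ω_q(Θᵏ − Θᵏ'). -/
noncomputable def pnjglObj {K p : ℕ} (q : ℝ≥0∞) (n : Fin K → ℝ)
    (lam₁ lam₂ : ℝ) (S : Fin K → Matrix (Fin p) (Fin p) ℝ)
    (Θ : Fin K → Matrix (Fin p) (Fin p) ℝ) : ℝ :=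
  (∑ k : Fin K, n k * (-Real.log (Θ k).det + (S k * Θ k).trace))
    + lam₁ * (∑ k : Fin K, ∑ i : Fin p, ∑ j : Fin p, |Θ k i j|)
    + lam₂ * ∑ k : Fin K, ∑ k' : Fin K,
        (if k < k' then rcon1 q (Θ k - Θ k') else 0)

/-
Replacing every Θᵏ by its block-diagonal part Ψᵏ (the entries on T) keeps it positive definite
and does not increase the objective, strictly decreasing it unless Θᵏ = Ψᵏ for all k:
* log det Θᵏ < log det Ψᵏ when Θᵏ ≠ Ψᵏ, by strict concavity of log det at Ψᵏ, since the gradient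
  term tr((Ψᵏ)⁻¹ (Θᵏ − Ψᵏ)) vanishes: (Ψᵏ)⁻¹ is block diagonal and Θᵏ − Ψᵏ vanishes on T;
* off T, the condition n_k |Sᵏᵢⱼ| ≤ λ₁ lets the ℓ₁ penalty dominate the trace term;
* restricting a decomposition Θᵏ − Θᵏ' = V + Vᵀ to T decomposes Ψᵏ − Ψᵏ' with smaller columns,
  so Ω_q does not increase.
Hence a minimizer with a nonzero entry off T could be strictly improved.
-/

open scoped ComplexOrder

namespace Matrix

variable {n β α : Type*} [DecidableEq β]

/-- With `b i` the block containing `i`, this zeroes the entries of `M` off `T`. -/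
def blockPart [Zero α] (b : n → β) (M : Matrix n n α) : Matrix n n α :=
  of fun i j => if b i = b j then M i j else 0

@[simp]
lemma blockPart_apply [Zero α] (b : n → β) (M : Matrix n n α) (i j : n) :
    M.blockPart b i j = if b i = b j then M i j else 0 := rfl

lemma blockPart_transpose [Zero α] (b : n → β) (M : Matrix n n α) :
    (M.blockPart b)ᵀ = Mᵀ.blockPart b := by
  ext i j
  simp [eq_comm]

lemma blockPart_conjTranspose [AddMonoid α] [StarAddMonoid α] (b : n → β) (M : Matrix n n α) :
    (M.blockPart b)ᴴ = Mᴴ.blockPart b := by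
  ext i j
  simp [eq_comm, apply_ite star]

lemma blockPart_sub [SubNegZeroMonoid α] (b : n → β) (M N : Matrix n n α) :
    (M - N).blockPart b = M.blockPart b - N.blockPart b := by
  ext i j
  simp only [blockPart_apply, sub_apply]
  split_ifs <;> simp

lemma blockPart_add [AddZeroClass α] (b : n → β) (M N : Matrix n n α) :
    (M + N).blockPart b = M.blockPart b + N.blockPart b := by
  ext i j
  simp only [blockPart_apply, add_apply]
  split_ifs <;> simp

@[simp]
lemma blockPart_blockPart [Zero α] (b : n → β) (M : Matrix n n α) :
    (M.blockPart b).blockPart b = M.blockPart b := by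
  ext i j
  by_cases h : b i = b j <;> simp [h]

variable [Fintype n]

lemma trace_mul_blockPart [NonUnitalNonAssocSemiring α] (b : n → β) {A : Matrix n n α}
    (hA : A.blockPart b = A) (B : Matrix n n α) : (A * B.blockPart b).trace = (A * B).trace := by
  conv_rhs => rw [← hA]
  simp only [trace, diag_apply, mul_apply, blockPart_apply, ite_mul, mul_ite, zero_mul, mul_zero]
  exact Finset.sum_congr rfl fun i _ => Finset.sum_congr rfl fun j _ => if_congr eq_comm rfl rfl

lemma trace_mul_add_sum_abs {R : Type*} [Ring R] [LinearOrder R] (S N : Matrix n n R) (c : R) :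
    (S * N).trace + c * ∑ i, ∑ j, |N i j| = ∑ i, ∑ j, (S i j * N j i + c * |N j i|) := by
  rw [Finset.sum_comm (f := fun i j => |N i j|)]
  simp only [trace, diag_apply, mul_apply, Finset.mul_sum, ← Finset.sum_add_distrib]

lemma trace_mul_blockPart_add_le {R : Type*} [Ring R] [LinearOrder R] [IsOrderedRing R]
    (b : n → β) {S : Matrix n n R} {c : R} (hS : ∀ i j, b i ≠ b j → |S i j| ≤ c)
    (M : Matrix n n R) :
    (S * M.blockPart b).trace + c * ∑ i, ∑ j, |M.blockPart b i j| ≤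
      (S * M).trace + c * ∑ i, ∑ j, |M i j| := by
  rw [trace_mul_add_sum_abs, trace_mul_add_sum_abs]
  refine Finset.sum_le_sum fun i _ => Finset.sum_le_sum fun j _ => ?_
  rw [blockPart_apply]
  split_ifs with h
  · rfl
  · calc S i j * 0 + c * |0| = 0 := by simp
      _ ≤ S i j * M j i + |S i j| * |M j i| := by
        rw [← abs_mul]; exact add_abs_nonneg _
      _ ≤ S i j * M j i + c * |M j i| := by
        gcongr; exact hS i j (Ne.symm h)

variable {𝕜 : Type*} [RCLike 𝕜]

lemma dotProduct_blockPart_mulVec (b : n → β) (M : Matrix n n 𝕜) (x : n → 𝕜) :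
    star x ⬝ᵥ (M.blockPart b *ᵥ x) =
      ∑ l ∈ Finset.univ.image b, star (fun i => if b i = l then x i else 0) ⬝ᵥ
        (M *ᵥ fun i => if b i = l then x i else 0) := by
  simp only [dotProduct, mulVec, Finset.mul_sum, Pi.star_apply, apply_ite (star : 𝕜 → 𝕜), star_zero,
    blockPart_apply, ite_mul, mul_ite, zero_mul, mul_zero]
  symm
  rw [Finset.sum_comm]
  refine Finset.sum_congr rfl fun i _ => ?_
  rw [Finset.sum_comm]
  refine Finset.sum_congr rfl fun j _ => ?_
  simp

lemma PosDef.blockPart (b : n → β) {M : Matrix n n 𝕜} (hM : M.PosDef) :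
    (M.blockPart b).PosDef := by
  refine .of_dotProduct_mulVec_pos (by rw [IsHermitian, blockPart_conjTranspose, hM.1])
    fun x hx => ?_
  obtain ⟨i, hi⟩ := Function.ne_iff.mp hx
  rw [dotProduct_blockPart_mulVec]
  refine Finset.sum_pos' (fun l _ => hM.posSemidef.dotProduct_mulVec_nonneg _)
    ⟨b i, Finset.mem_image_of_mem b (Finset.mem_univ i), hM.dotProduct_mulVec_pos fun h => hi ?_⟩
  simpa using congr_fun h i

variable [DecidableEq n]

lemma blockPart_eq_self_iff_commute [Semiring α] (b : n → β) (M : Matrix n n α) :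
    M.blockPart b = M ↔ ∀ l, Commute M (diagonal fun i => if b i = l then 1 else 0) := by
  refine ⟨fun h l => ?_, fun h => ?_⟩
  · ext i j
    simp only [mul_diagonal, diagonal_mul]
    rw [← h]
    by_cases hi : b i = l <;> by_cases hj : b j = l <;> grind [blockPart_apply]
  · ext i j
    have := congr_fun₂ (h (b j)) i j
    simp only [mul_diagonal, diagonal_mul] at this
    simp only [blockPart_apply]
    split_ifs with hij <;> simp_all

lemma blockPart_nonsing_inv [CommRing α] (b : n → β) {M : Matrix n n α}
    (hM : M.blockPart b = M) : M⁻¹.blockPart b = M⁻¹ := by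
  by_cases hu : IsUnit M
  · obtain ⟨u, rfl⟩ := hu
    rw [blockPart_eq_self_iff_commute] at hM ⊢
    exact fun l => coe_units_inv u ▸ (hM l).units_inv_left
  · rw [nonsing_inv_eq_ringInverse, Ring.inverse_non_unit _ hu]
    ext; simp

lemma PosDef.log_det_lt_trace_sub_card {C : Matrix n n ℝ} (hC : C.PosDef) (h1 : C ≠ 1) :
    Real.log C.det < C.trace - Fintype.card n := by
  set μ := hC.1.eigenvalues
  have hμ : ∀ i, 0 < μ i := hC.eigenvalues_pos
  obtain ⟨i, hi⟩ : ∃ i, μ i ≠ 1 := by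
    by_contra! h
    apply h1
    rw [hC.1.spectral_theorem, show (RCLike.ofReal ∘ μ : n → ℝ) = fun _ => 1 from funext h,
      diagonal_one, map_one]
  calc Real.log C.det = ∑ i, Real.log (μ i) := by
        rw [hC.1.det_eq_prod_eigenvalues, RCLike.ofReal_real_eq_id]
        exact Real.log_prod fun i _ => (hμ i).ne'
    _ < ∑ i, (μ i - 1) := Finset.sum_lt_sum (fun i _ => Real.log_le_sub_one_of_pos (hμ i))
        ⟨i, Finset.mem_univ i, Real.log_lt_sub_one_of_pos (hμ i) hi⟩
    _ = C.trace - Fintype.card n := by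
        simp [hC.1.trace_eq_sum_eigenvalues, Finset.sum_sub_distrib, μ]

open scoped MatrixOrder in
lemma PosDef.log_det_lt_log_det_add_trace {A B : Matrix n n ℝ} (hA : A.PosDef) (hB : B.PosDef)
    (hne : B ≠ A) : Real.log B.det < Real.log A.det + (A⁻¹ * (B - A)).trace := by
  set R := CFC.sqrt A
  have hRR : R * R = A := CFC.sqrt_mul_sqrt_self A hA.posSemidef.nonneg
  have hRh : Rᴴ = R := (CFC.sqrt_nonneg A).posSemidef.1
  have hR : IsUnit R.det := by
    rw [isUnit_iff_ne_zero]
    exact left_ne_zero_of_mul (by rw [← det_mul, hRR]; exact hA.det_pos.ne')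
  -- the congruence by A^(-1/2) reduces the inequality to the case A = 1
  set C := R⁻¹ * B * R⁻¹
  have hC : C.PosDef := by
    have := hB.conjTranspose_mul_mul_same (B := R⁻¹) <| mulVec_injective_iff_isUnit.mpr <|
      (isUnit_iff_isUnit_det _).mpr (isUnit_nonsing_inv_det R hR)
    rwa [conjTranspose_nonsing_inv, hRh] at this
  have hB_eq : B = R * C * R := by
    simp only [C, Matrix.mul_assoc, mul_nonsing_inv_cancel_left _ _ hR, nonsing_inv_mul _ hR,
      mul_one]
  clear_value R C
  have hC1 : C ≠ 1 := fun h => hne (by rw [hB_eq, h, mul_one, hRR])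
  have hdet : B.det = A.det * C.det := by
    rw [hB_eq, ← hRR, det_mul, det_mul, det_mul]; ring
  have htr : (A⁻¹ * (B - A)).trace = C.trace - Fintype.card n := by
    rw [← trace_one, ← trace_sub, ← hRR, hB_eq, Matrix.mul_inv_rev]
    rw [show R⁻¹ * R⁻¹ * (R * C * R - R * R) = R⁻¹ * (C - 1) * R by
        simp only [mul_sub, sub_mul, Matrix.mul_assoc, nonsing_inv_mul_cancel_left _ _ hR, one_mul],
      trace_mul_cycle, mul_nonsing_inv _ hR, one_mul]
  rw [hdet, Real.log_mul hA.det_pos.ne' hC.det_pos.ne', htr]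
  linarith [hC.log_det_lt_trace_sub_card hC1]

lemma PosDef.log_det_lt_log_det_blockPart (b : n → β) {M : Matrix n n ℝ} (hM : M.PosDef)
    (hne : M.blockPart b ≠ M) : Real.log M.det < Real.log (M.blockPart b).det := by
  have hinv := blockPart_nonsing_inv b (blockPart_blockPart b M)
  have htr : ((M.blockPart b)⁻¹ * (M - M.blockPart b)).trace = 0 := by
    rw [mul_sub, trace_sub, ← trace_mul_blockPart b hinv M, sub_self]
  simpa [htr] using (hM.blockPart b).log_det_lt_log_det_add_trace hM hne.symm

end Matrix

lemma lqNorm_nonneg (q : ℝ≥0∞) {ι : Type*} [Fintype ι] (x : ι → ℝ) : 0 ≤ lqNorm q x := by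
  unfold lqNorm
  rcases eq_or_ne q 0 with rfl | h0
  · rw [PiLp.norm_eq_card]; positivity
  rcases eq_or_ne q ∞ with rfl | htop
  · rw [PiLp.norm_eq_ciSup]; exact Real.iSup_nonneg fun i => norm_nonneg _
  · rw [PiLp.norm_eq_sum (ENNReal.toReal_pos h0 htop)]; positivity

lemma lqNorm_mono (q : ℝ≥0∞) {ι : Type*} [Fintype ι] {x y : ι → ℝ} (h : ∀ i, |x i| ≤ |y i|) :
    lqNorm q x ≤ lqNorm q y := by
  unfold lqNorm
  rcases eq_or_ne q 0 with rfl | h0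
  · rw [PiLp.norm_eq_card, PiLp.norm_eq_card]
    exact_mod_cast Finset.card_le_card fun i hi => by
      simp only [Set.Finite.mem_toFinset, Set.mem_ofPred_eq, WithLp.equiv_symm_apply,
        PiLp.toLp_apply, norm_ne_zero_iff] at hi ⊢
      exact abs_pos.mp ((abs_pos.mpr hi).trans_le (h i))
  rcases eq_or_ne q ∞ with rfl | htop
  · rw [PiLp.norm_eq_ciSup, PiLp.norm_eq_ciSup]
    exact ciSup_mono (Set.finite_range _).bddAbove fun i => by simpa using h i
  · have hq := ENNReal.toReal_pos h0 htop
    rw [PiLp.norm_eq_sum hq, PiLp.norm_eq_sum hq]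
    gcongr with i
    simpa using h i

lemma rcon1_blockPart_le {β : Type*} [DecidableEq β] (q : ℝ≥0∞) {p : ℕ} (b : Fin p → β)
    {M : Matrix (Fin p) (Fin p) ℝ} (hM : M.IsSymm) :
    rcon1 q (M.blockPart b) ≤ rcon1 q M := by
  refine le_csInf ⟨_, (1 / 2 : ℝ) • M, ?_, rfl⟩ ?_
  · rw [transpose_smul, hM.eq, ← add_smul]; norm_num
  rintro _ ⟨V, rfl, rfl⟩
  refine le_trans
    (csInf_le ⟨0, ?_⟩ ⟨V.blockPart b, by rw [blockPart_add, blockPart_transpose], rfl⟩) ?_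
  · rintro _ ⟨W, -, rfl⟩
    exact Finset.sum_nonneg fun j _ => lqNorm_nonneg q _
  · refine Finset.sum_le_sum fun j _ => lqNorm_mono q fun i => ?_
    rw [blockPart_apply]
    split_ifs <;> simp

lemma gaussNLL_add_l1_blockPart_lt {n β : Type*} [Fintype n] [DecidableEq n] [DecidableEq β]
    (b : n → β) {w c : ℝ} (hw : 0 < w) {S M : Matrix n n ℝ}
    (hS : ∀ i j, b i ≠ b j → w * |S i j| ≤ c) (hM : M.PosDef) (hne : M.blockPart b ≠ M) :
    w * (-Real.log (M.blockPart b).det + (S * M.blockPart b).trace)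
        + c * ∑ i, ∑ j, |M.blockPart b i j|
      < w * (-Real.log M.det + (S * M).trace) + c * ∑ i, ∑ j, |M i j| := by
  have hwS : ∀ i j, b i ≠ b j → |(w • S) i j| ≤ c := fun i j h => by
    simpa [abs_mul, abs_of_pos hw] using hS i j h
  have := trace_mul_blockPart_add_le b hwS M
  simp only [smul_mul, trace_smul, smul_eq_mul] at this
  linarith [mul_lt_mul_of_pos_left (hM.log_det_lt_log_det_blockPart b hne) hw]

lemma pnjglObj_blockPart_lt {K p : ℕ} {β : Type*} [DecidableEq β] (q : ℝ≥0∞) {n : Fin K → ℝ}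
    (hn : ∀ k, 0 < n k) {lam₁ lam₂ : ℝ} (hlam₂ : 0 ≤ lam₂) {S : Fin K → Matrix (Fin p) (Fin p) ℝ}
    (b : Fin p → β) (hS : ∀ k i j, b i ≠ b j → n k * |S k i j| ≤ lam₁)
    {Θ : Fin K → Matrix (Fin p) (Fin p) ℝ} (hΘ : ∀ k, (Θ k).PosDef)
    (hne : ∃ k, (Θ k).blockPart b ≠ Θ k) :
    pnjglObj q n lam₁ lam₂ S (fun k => (Θ k).blockPart b) < pnjglObj q n lam₁ lam₂ S Θ := by
  have hterm (k) := gaussNLL_add_l1_blockPart_lt b (hn k) (hS k) (hΘ k)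
  have hseparable : ∑ k, n k * (-Real.log ((Θ k).blockPart b).det + (S k * (Θ k).blockPart b).trace)
        + lam₁ * ∑ k, ∑ i, ∑ j, |(Θ k).blockPart b i j|
      < ∑ k, n k * (-Real.log (Θ k).det + (S k * Θ k).trace)
        + lam₁ * ∑ k, ∑ i, ∑ j, |Θ k i j| := by
    rw [Finset.mul_sum, ← Finset.sum_add_distrib, Finset.mul_sum, ← Finset.sum_add_distrib]
    obtain ⟨k₀, hk₀⟩ := hne
    refine Finset.sum_lt_sum (fun k _ => ?_) ⟨k₀, Finset.mem_univ _, hterm k₀ hk₀⟩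
    rcases eq_or_ne ((Θ k).blockPart b) (Θ k) with h | h
    · rw [h]
    · exact (hterm k h).le
  have hfused : ∑ k, ∑ k', (if k < k' then rcon1 q ((Θ k).blockPart b - (Θ k').blockPart b) else 0)
      ≤ ∑ k, ∑ k', (if k < k' then rcon1 q (Θ k - Θ k') else 0) := by
    gcongr with k _ k' _
    split_ifs
    · rw [← blockPart_sub]
      exact rcon1_blockPart_le q b
        (isHermitian_iff_isSymm.mp ((hΘ k).isHermitian.sub (hΘ k').isHermitian))
    · rfl
  unfold pnjglObj
  linarith [mul_le_mul_of_nonneg_left hfused hlam₂]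

theorem pnjgl_sufficient_general (K p L : ℕ) (q : ℝ≥0∞)
    (n : Fin K → ℝ) (hn : ∀ k, 0 < n k)
    (lam₁ lam₂ : ℝ) (hlam₂ : 0 ≤ lam₂)
    (S : Fin K → Matrix (Fin p) (Fin p) ℝ)
    (I : Fin L → Finset (Fin p)) (hpart : ∀ i : Fin p, ∃! l, i ∈ I l)
    (hcond : ∀ k, ∀ i j : Fin p, ¬ (∃ l, i ∈ I l ∧ j ∈ I l) →
      n k * |S k i j| ≤ lam₁)
    (Θ : Fin K → Matrix (Fin p) (Fin p) ℝ) (hΘ : ∀ k, (Θ k).PosDef)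
    (hmin : ∀ Ψ : Fin K → Matrix (Fin p) (Fin p) ℝ, (∀ k, (Ψ k).PosDef) →
      pnjglObj q n lam₁ lam₂ S Θ ≤ pnjglObj q n lam₁ lam₂ S Ψ) :
    ∀ k, ∀ i j : Fin p, ¬ (∃ l, i ∈ I l ∧ j ∈ I l) → Θ k i j = 0 := by
  choose b hb hb_unique using hpart
  have hblock (i j : Fin p) : (∃ l, i ∈ I l ∧ j ∈ I l) ↔ b i = b j :=
    ⟨fun ⟨l, hi, hj⟩ => (hb_unique i l hi).symm.trans (hb_unique j l hj),
      fun h => ⟨b i, hb i, h ▸ hb j⟩⟩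
  intro k i j hij
  by_contra hΘij
  refine (hmin _ fun k => (hΘ k).blockPart b).not_gt
    (pnjglObj_blockPart_lt q hn hlam₂ b (fun k i j h => hcond k i j ((hblock i j).not.mpr h)) hΘ
      ⟨k, fun h => hΘij ?_⟩)
  rw [← h, blockPart_apply, if_neg ((hblock i j).not.mp hij)]

/-- Theorem 3, sufficient condition for PNJGL: if
n_k|Sᵏ_{ij}| ≤ λ₁ for all (i,j) ∈ T^c and all k, where T = ∪_l I_l × I_l for a
partition (I_l), then every K-tuple of symmetric positive definite matrices
minimizing the PNJGL objective is supported on T. -/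
theorem pnjgl_sufficient (K p L : ℕ) (hK : 2 ≤ K) (q : ℝ≥0∞) (hq : 1 ≤ q)
    (n : Fin K → ℝ) (hn : ∀ k, 0 < n k)
    (lam₁ lam₂ : ℝ) (hlam₁ : 0 ≤ lam₁) (hlam₂ : 0 ≤ lam₂)
    (S : Fin K → Matrix (Fin p) (Fin p) ℝ) (hS : ∀ k, (S k).IsSymm)
    (I : Fin L → Finset (Fin p)) (hpart : ∀ i : Fin p, ∃! l, i ∈ I l)
    (hcond : ∀ k, ∀ i j : Fin p, ¬ (∃ l, i ∈ I l ∧ j ∈ I l) →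
      n k * |S k i j| ≤ lam₁)
    (Θ : Fin K → Matrix (Fin p) (Fin p) ℝ) (hΘ : ∀ k, (Θ k).PosDef)
    (hmin : ∀ Ψ : Fin K → Matrix (Fin p) (Fin p) ℝ, (∀ k, (Ψ k).PosDef) →
      pnjglObj q n lam₁ lam₂ S Θ ≤ pnjglObj q n lam₁ lam₂ S Ψ) :
    ∀ k, ∀ i j : Fin p, ¬ (∃ l, i ∈ I l ∧ j ∈ I l) → Θ k i j = 0 :=
  pnjgl_sufficient_general K p L q n hn lam₁ lam₂ hlam₂ S I hpart hcond Θ hΘ hmin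
end

section
/- Let q = 1 and K = 2. Let n₁, n₂ > 0, λ₁, λ₂ ≥ 0, let S¹, S² be symmetric p×p real matrices, let (I₁,…,I_L) be a partition of {1,…,p}, and let T = ∪_{l=1}^L I_l × I_l. If for every (i,j) ∈ T^c one has n₁|S¹_{ij}| ≤ λ₁ + λ₂/2, n₂|S²_{ij}| ≤ λ₁ + λ₂/2, and |n₁S¹_{ij} + n₂S²_{ij}| ≤ 2λ₁, then every pair (Θ̂¹, Θ̂²) of symmetric positive definite p×p matrices minimizing the PNJGL objective F(Θ¹,Θ²) = Σ_{k=1}^2 n_k(−log det Θᵏ + trace(SᵏΘᵏ)) + λ₁ Σ_{k=1}^2 Σ_{i,j}|Θᵏ_{ij}| + λ₂ Ω₁(Θ¹ − Θ²) over all pairs of symmetric positive definite matrices has both Θ̂¹ and Θ̂² supported on T. -/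
open Matrix
open scoped ENNReal BigOperators

/-- The PNJGL objective for K = 2 precision matrices with q = 1. -/
noncomputable def pnjglObj2 {p : ℕ} (q : ℝ≥0∞) (n₁ n₂ lam₁ lam₂ : ℝ)
    (S₁ S₂ A B : Matrix (Fin p) (Fin p) ℝ) : ℝ :=
  n₁ * (-Real.log A.det + (S₁ * A).trace)
    + n₂ * (-Real.log B.det + (S₂ * B).trace)
    + lam₁ * (∑ i : Fin p, ∑ j : Fin p, |A i j|)
    + lam₁ * (∑ i : Fin p, ∑ j : Fin p, |B i j|)
    + lam₂ * rcon1 q (A - B)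

/-!
Write `R` for the map that keeps the diagonal blocks `I_l × I_l` of a matrix and zeroes the rest.
For a positive definite `Θ`, `R Θ` is positive definite and, by Fischer's inequality,
`log det Θ ≤ log det (R Θ)`, with equality only if `Θ = R Θ`: whitening `Θ` by `(R Θ)^{-1/2}`
gives `M` with `log det M ≤ tr M - p`, and `tr M = tr ((R Θ)⁻¹ Θ) = p` because `(R Θ)⁻¹` is again
block diagonal. For symmetric arguments `Ω₁(Θ) = ½ Σ |Θᵢⱼ|`, so the rest of the objective is a sum
of entrywise terms, and off the blocks the hypotheses say exactly that `(n₁ S¹ᵢⱼ, n₂ S²ᵢⱼ)` is a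
subgradient at `0` of `(a, b) ↦ λ₁ (|a| + |b|) + λ₂/2 |a - b|`. Hence `(R Θ̂¹, R Θ̂²)` does at
least as well as a minimiser, strictly better unless `R Θ̂ᵏ = Θ̂ᵏ` for both `k`.
-/

namespace Matrix

variable {n : Type*}

section LogDet

variable [Fintype n] [DecidableEq n]

theorem PosDef.trace_sub_card_sub_log_det {M : Matrix n n ℝ} (hM : M.PosDef) :
    M.trace - Fintype.card n - Real.log M.det =
      ∑ i, (hM.1.eigenvalues i - 1 - Real.log (hM.1.eigenvalues i)) := by
  rw [hM.1.trace_eq_sum_eigenvalues, hM.1.det_eq_prod_eigenvalues]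
  simp only [RCLike.ofReal_real_eq_id, id, Finset.sum_sub_distrib, Finset.sum_const,
    Finset.card_univ, nsmul_eq_mul, mul_one]
  rw [Real.log_prod fun i _ => (hM.eigenvalues_pos i).ne']

theorem PosDef.log_det_le_trace_sub_card {M : Matrix n n ℝ} (hM : M.PosDef) :
    Real.log M.det ≤ M.trace - Fintype.card n := by
  have := Finset.sum_nonneg fun i (_ : i ∈ Finset.univ) =>
    sub_nonneg.mpr (Real.log_le_sub_one_of_pos (hM.eigenvalues_pos i))
  linarith [hM.trace_sub_card_sub_log_det]

theorem PosDef.eq_one_of_trace_sub_card_le_log_det {M : Matrix n n ℝ} (hM : M.PosDef)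
    (h : M.trace - Fintype.card n ≤ Real.log M.det) : M = 1 := by
  have hzero := (Finset.sum_eq_zero_iff_of_nonneg fun i (_ : i ∈ Finset.univ) =>
    sub_nonneg.mpr (Real.log_le_sub_one_of_pos (hM.eigenvalues_pos i))).mp
      (by linarith [hM.trace_sub_card_sub_log_det, hM.log_det_le_trace_sub_card])
  have heig : hM.1.eigenvalues = 1 := funext fun i => by
    by_contra hne
    linarith [Real.log_lt_sub_one_of_pos (hM.eigenvalues_pos i) hne, hzero i (Finset.mem_univ _)]
  rw [hM.1.spectral_theorem, heig]
  simp

open scoped MatrixOrder in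
/-- The witness is `C^{-1/2} A C^{-1/2}`. -/
theorem PosDef.exists_whitening {A C : Matrix n n ℝ} (hA : A.PosDef) (hC : C.PosDef) :
    ∃ M : Matrix n n ℝ, M.PosDef ∧ Real.log M.det = Real.log A.det - Real.log C.det ∧
      M.trace = (C⁻¹ * A).trace ∧ (M = 1 → A = C) := by
  set B := CFC.sqrt C⁻¹
  have hB : B.IsHermitian := (CFC.sqrt_nonneg _).posSemidef.1
  have hBB : B * B = C⁻¹ := CFC.sqrt_mul_sqrt_self _ hC.inv.posSemidef.nonneg
  have hdetB : B.det * B.det = C.det⁻¹ := by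
    rw [← det_mul, hBB, det_nonsing_inv, Ring.inverse_eq_inv]
  have hCdet := hC.det_pos
  have hBunit : IsUnit B.det := isUnit_iff_ne_zero.mpr fun h0 => by
    simp only [h0, mul_zero, zero_eq_inv] at hdetB
    exact hCdet.ne' hdetB.symm
  have hdetM : (B * A * B).det = A.det * C.det⁻¹ := by
    rw [det_mul, det_mul, ← hdetB]; ring
  refine ⟨B * A * B, ?_, ?_, ?_, fun h1 => ?_⟩
  · have hpsd := hA.posSemidef.mul_mul_conjTranspose_same B
    rw [hB.eq] at hpsd
    refine hpsd.posDef_iff_det_ne_zero.mpr ?_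
    rw [hdetM]
    exact mul_ne_zero hA.det_pos.ne' (inv_ne_zero hCdet.ne')
  · rw [hdetM, Real.log_mul hA.det_pos.ne' (inv_ne_zero hCdet.ne'), Real.log_inv, sub_eq_add_neg]
  · rw [trace_mul_cycle, hBB]
  · calc A = B⁻¹ * (B * A * B) * B⁻¹ := by
          simp only [← Matrix.mul_assoc, nonsing_inv_mul _ hBunit, Matrix.one_mul,
            Matrix.mul_assoc A, mul_nonsing_inv _ hBunit, Matrix.mul_one]
      _ = (B * B)⁻¹ := by rw [h1, Matrix.mul_one, mul_inv_rev]
      _ = C := by rw [hBB, nonsing_inv_nonsing_inv _ hCdet.ne'.isUnit]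

theorem PosDef.log_det_sub_log_det_le {A C : Matrix n n ℝ} (hA : A.PosDef) (hC : C.PosDef) :
    Real.log A.det - Real.log C.det ≤ (C⁻¹ * A).trace - Fintype.card n := by
  obtain ⟨M, hM, hlog, htr, -⟩ := hA.exists_whitening hC
  rw [← hlog, ← htr]
  exact hM.log_det_le_trace_sub_card

theorem PosDef.eq_of_trace_sub_card_le_log_det_sub_log_det {A C : Matrix n n ℝ} (hA : A.PosDef)
    (hC : C.PosDef) (h : (C⁻¹ * A).trace - Fintype.card n ≤ Real.log A.det - Real.log C.det) :
    A = C := by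
  obtain ⟨M, hM, hlog, htr, hM1⟩ := hA.exists_whitening hC
  rw [← hlog, ← htr] at h
  exact hM1 (hM.eq_one_of_trace_sub_card_le_log_det h)

end LogDet

variable {β : Type*} [DecidableEq β]

/-- The partition `(I_l)` is encoded by `b`, with `b i` the index of the block containing `i`. -/
def blockRestrict {R : Type*} [Zero R] (b : n → β) (A : Matrix n n R) : Matrix n n R :=
  of fun i j => if b i = b j then A i j else 0

@[simp]
theorem blockRestrict_apply {R : Type*} [Zero R] (b : n → β) (A : Matrix n n R) (i j : n) :
    blockRestrict b A i j = if b i = b j then A i j else 0 :=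
  rfl

variable [Fintype n]

theorem dotProduct_blockRestrict_mulVec {R : Type*} [CommSemiring R] [StarRing R] [Fintype β]
    (b : n → β) (A : Matrix n n R) (x : n → R) :
    star x ⬝ᵥ blockRestrict b A *ᵥ x =
      ∑ l, star (fun i => if b i = l then x i else 0) ⬝ᵥ
        A *ᵥ (fun i => if b i = l then x i else 0) := by
  simp only [dotProduct, mulVec, Pi.star_apply, Finset.mul_sum, blockRestrict_apply]
  conv_rhs => rw [Finset.sum_comm]
  refine Finset.sum_congr rfl fun i _ => ?_
  conv_rhs => rw [Finset.sum_comm]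
  refine Finset.sum_congr rfl fun j _ => ?_
  simp only [apply_ite star, star_zero, ite_mul, mul_ite, zero_mul, mul_zero]
  rw [Finset.sum_ite_eq, if_pos (Finset.mem_univ _)]

open scoped ComplexOrder in
theorem PosDef.blockRestrict {𝕜 : Type*} [RCLike 𝕜] [Fintype β] {A : Matrix n n 𝕜}
    (hA : A.PosDef) (b : n → β) : (blockRestrict b A).PosDef := by
  refine posDef_iff_dotProduct_mulVec.mpr ⟨?_, fun x hx => ?_⟩
  · ext i j
    simp only [conjTranspose_apply, blockRestrict_apply, apply_ite star, star_zero, eq_comm,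
      hA.1.apply]
  · rw [dotProduct_blockRestrict_mulVec]
    obtain ⟨i, hi⟩ := Function.ne_iff.mp hx
    refine Finset.sum_pos' (fun l _ => hA.posSemidef.dotProduct_mulVec_nonneg _)
      ⟨b i, Finset.mem_univ _, hA.dotProduct_mulVec_pos ?_⟩
    exact Function.ne_iff.mpr ⟨i, by simpa using hi⟩

theorem trace_mul_blockRestrict {R : Type*} [CommSemiring R] {b : n → β} {X : Matrix n n R}
    (hX : ∀ i j, b i ≠ b j → X i j = 0) (A : Matrix n n R) :
    (X * blockRestrict b A).trace = (X * A).trace := by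
  simp only [trace, diag, mul_apply, blockRestrict_apply]
  refine Finset.sum_congr rfl fun i _ => Finset.sum_congr rfl fun j _ => ?_
  split_ifs with h
  · rfl
  · rw [hX i j (Ne.symm h), zero_mul, zero_mul]

variable [DecidableEq n] [LinearOrder β]

theorem inv_blockRestrict_apply_of_ne {R : Type*} [CommRing R] (b : n → β) (A : Matrix n n R)
    {i j : n} (h : b i ≠ b j) :
    (blockRestrict b A)⁻¹ i j = 0 := by
  by_cases hu : IsUnit (blockRestrict b A).det
  · have := invertibleOfIsUnitDet _ hu
    rcases h.lt_or_gt with hij | hji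
    · have hM : (blockRestrict b A).BlockTriangular (OrderDual.toDual ∘ b) :=
        fun _ _ hlt => if_neg (ne_of_gt hlt)
      exact blockTriangular_inv_of_blockTriangular hM hij
    · have hM : (blockRestrict b A).BlockTriangular b := fun _ _ hlt => if_neg (ne_of_gt hlt)
      exact blockTriangular_inv_of_blockTriangular hM hji
  · rw [nonsing_inv_apply_not_isUnit _ hu, zero_apply]

theorem trace_inv_blockRestrict_mul {R : Type*} [CommRing R] (b : n → β) {A : Matrix n n R}
    (hA : IsUnit (blockRestrict b A).det) :
    ((blockRestrict b A)⁻¹ * A).trace = Fintype.card n := by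
  rw [← trace_mul_blockRestrict (fun _ _ => inv_blockRestrict_apply_of_ne b A),
    nonsing_inv_mul _ hA, trace_one]

variable [Fintype β]

theorem PosDef.log_det_le_log_det_blockRestrict {A : Matrix n n ℝ} (hA : A.PosDef) (b : n → β) :
    Real.log A.det ≤ Real.log (Matrix.blockRestrict b A).det := by
  have hR := hA.blockRestrict b
  have := hA.log_det_sub_log_det_le hR
  rw [trace_inv_blockRestrict_mul b hR.det_pos.ne'.isUnit, sub_self] at this
  linarith

theorem PosDef.blockRestrict_eq_of_log_det_blockRestrict_le {A : Matrix n n ℝ} (hA : A.PosDef)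
    (b : n → β) (h : Real.log (Matrix.blockRestrict b A).det ≤ Real.log A.det) :
    Matrix.blockRestrict b A = A := by
  have hR := hA.blockRestrict b
  refine (hA.eq_of_trace_sub_card_le_log_det_sub_log_det hR ?_).symm
  rw [trace_inv_blockRestrict_mul b hR.det_pos.ne'.isUnit, sub_self]
  linarith

end Matrix

theorem lqNorm_one {ι : Type*} [Fintype ι] (x : ι → ℝ) : lqNorm 1 x = ∑ i, |x i| := by
  simp [lqNorm, PiLp.norm_eq_of_L1, Real.norm_eq_abs]

theorem rcon1_one_of_isSymm {p : ℕ} {Θ : Matrix (Fin p) (Fin p) ℝ} (hΘ : Θ.IsSymm) :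
    rcon1 1 Θ = (∑ i, ∑ j, |Θ i j|) / 2 := by
  refine IsLeast.csInf_eq ⟨⟨(1 / 2 : ℝ) • Θ, ?_, ?_⟩, ?_⟩
  · ext i j
    simp only [Matrix.add_apply, Matrix.smul_apply, transpose_apply, hΘ.apply, smul_eq_mul]
    ring
  · simp only [lqNorm_one, Matrix.smul_apply, smul_eq_mul, abs_mul,
      abs_of_pos (one_half_pos : (0 : ℝ) < 1 / 2), ← Finset.mul_sum]
    rw [Finset.sum_comm]
    ring
  · rintro _ ⟨V, rfl, rfl⟩
    simp only [lqNorm_one, Matrix.add_apply, transpose_apply]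
    have htri : ∑ i, ∑ j, |V i j + V j i| ≤ ∑ i, ∑ j, |V i j| + ∑ i, ∑ j, |V j i| := by
      rw [← Finset.sum_add_distrib]
      exact Finset.sum_le_sum fun i _ => by
        rw [← Finset.sum_add_distrib]
        exact Finset.sum_le_sum fun j _ => abs_add_le _ _
    rw [Finset.sum_comm (f := fun i j => |V i j|)] at htri
    linarith

/-- The witness `v` splits `(s, t)` as `(u + v, w - v)` with `|u|, |w| ≤ lam₁` and
`|v| ≤ lam₂ / 2`. -/
theorem mul_add_mul_add_penalty_nonneg {lam₁ lam₂ s t : ℝ} (hlam₂ : 0 ≤ lam₂)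
    (hs : |s| ≤ lam₁ + lam₂ / 2) (ht : |t| ≤ lam₁ + lam₂ / 2) (hst : |s + t| ≤ 2 * lam₁)
    (a b : ℝ) : 0 ≤ s * a + t * b + lam₁ * (|a| + |b|) + lam₂ / 2 * |a - b| := by
  rw [abs_le] at hs ht hst
  set v := max (s - lam₁) (max (-lam₁ - t) (-(lam₂ / 2)))
  have hv₁ : s - lam₁ ≤ v := le_max_left _ _
  have hv₂ : -lam₁ - t ≤ v := (le_max_left _ _).trans (le_max_right _ _)
  have hv₃ : -(lam₂ / 2) ≤ v := (le_max_right _ _).trans (le_max_right _ _)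
  have hv₄ : v ≤ s + lam₁ := max_le (by linarith) (max_le (by linarith) (by linarith))
  have hv₅ : v ≤ lam₁ - t := max_le (by linarith) (max_le (by linarith) (by linarith))
  have hv₆ : v ≤ lam₂ / 2 := max_le (by linarith) (max_le (by linarith) (by linarith))
  have neg_mul_le : ∀ c r x : ℝ, |c| ≤ r → -(c * x) ≤ r * |x| := fun c r x h =>
    (neg_le_abs _).trans ((abs_mul c x).trans_le (mul_le_mul_of_nonneg_right h (abs_nonneg x)))
  have hu := neg_mul_le (s - v) lam₁ a (abs_le.mpr ⟨by linarith, by linarith⟩)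
  have hw := neg_mul_le (t + v) lam₁ b (abs_le.mpr ⟨by linarith, by linarith⟩)
  have hv := neg_mul_le v (lam₂ / 2) (a - b) (abs_le.mpr ⟨hv₃, hv₆⟩)
  linarith

theorem pnjglObj2_one_eq {p : ℕ} (n₁ n₂ lam₁ lam₂ : ℝ) (S₁ S₂ : Matrix (Fin p) (Fin p) ℝ)
    {A B : Matrix (Fin p) (Fin p) ℝ} (hA : A.IsSymm) (hB : B.IsSymm) :
    pnjglObj2 1 n₁ n₂ lam₁ lam₂ S₁ S₂ A B =
      -(n₁ * Real.log A.det) - n₂ * Real.log B.det +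
        ∑ i, ∑ j, (n₁ * S₁ i j * A i j + n₂ * S₂ i j * B i j + lam₁ * (|A i j| + |B i j|) +
          lam₂ / 2 * |A i j - B i j|) := by
  have htrace : ∀ {S C : Matrix (Fin p) (Fin p) ℝ}, C.IsSymm →
      (S * C).trace = ∑ i, ∑ j, S i j * C i j := fun hC => by
    simp only [trace, diag, mul_apply, hC.apply]
  rw [pnjglObj2, rcon1_one_of_isSymm (hA.sub hB), htrace hA, htrace hB]
  simp only [Matrix.sub_apply, Finset.sum_add_distrib, mul_add, mul_assoc, ← Finset.mul_sum]
  ring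

theorem pnjglObj2_one_blockRestrict_add_le {p : ℕ} {β : Type*} [DecidableEq β] (b : Fin p → β)
    {n₁ n₂ lam₁ lam₂ : ℝ} (hn₁ : 0 ≤ n₁) (hn₂ : 0 ≤ n₂) (hlam₂ : 0 ≤ lam₂)
    {S₁ S₂ : Matrix (Fin p) (Fin p) ℝ}
    (hcond : ∀ i j, b i ≠ b j →
      n₁ * |S₁ i j| ≤ lam₁ + lam₂ / 2 ∧ n₂ * |S₂ i j| ≤ lam₁ + lam₂ / 2 ∧
        |n₁ * S₁ i j + n₂ * S₂ i j| ≤ 2 * lam₁)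
    {A B : Matrix (Fin p) (Fin p) ℝ} (hA : A.IsSymm) (hB : B.IsSymm) :
    pnjglObj2 1 n₁ n₂ lam₁ lam₂ S₁ S₂ (blockRestrict b A) (blockRestrict b B) +
        n₁ * (Real.log (blockRestrict b A).det - Real.log A.det) +
        n₂ * (Real.log (blockRestrict b B).det - Real.log B.det) ≤
      pnjglObj2 1 n₁ n₂ lam₁ lam₂ S₁ S₂ A B := by
  have hsymm : ∀ {C : Matrix (Fin p) (Fin p) ℝ}, C.IsSymm → (blockRestrict b C).IsSymm :=
    fun hC => IsSymm.ext fun i j => by simp only [blockRestrict_apply, eq_comm, hC.apply]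
  rw [pnjglObj2_one_eq _ _ _ _ _ _ hA hB, pnjglObj2_one_eq _ _ _ _ _ _ (hsymm hA) (hsymm hB)]
  have hsum := Finset.sum_le_sum fun i (_ : i ∈ Finset.univ) =>
    Finset.sum_le_sum fun j (_ : j ∈ Finset.univ) => show
      n₁ * S₁ i j * blockRestrict b A i j + n₂ * S₂ i j * blockRestrict b B i j +
        lam₁ * (|blockRestrict b A i j| + |blockRestrict b B i j|) +
        lam₂ / 2 * |blockRestrict b A i j - blockRestrict b B i j| ≤
      n₁ * S₁ i j * A i j + n₂ * S₂ i j * B i j + lam₁ * (|A i j| + |B i j|) +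
        lam₂ / 2 * |A i j - B i j| by
      by_cases hij : b i = b j
      · simp only [blockRestrict_apply, if_pos hij, le_refl]
      · obtain ⟨h₁, h₂, h₁₂⟩ := hcond i j hij
        simp only [blockRestrict_apply, if_neg hij, mul_zero, sub_zero, abs_zero, add_zero]
        rw [← abs_of_nonneg hn₁, ← abs_mul] at h₁
        rw [← abs_of_nonneg hn₂, ← abs_mul] at h₂
        exact mul_add_mul_add_penalty_nonneg hlam₂ h₁ h₂ h₁₂ (A i j) (B i j)
  linarith

theorem pnjgl_sufficient_q_one_general (p L : ℕ)
    (n₁ n₂ : ℝ) (hn₁ : 0 < n₁) (hn₂ : 0 < n₂)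
    (lam₁ lam₂ : ℝ) (hlam₂ : 0 ≤ lam₂)
    (S₁ S₂ : Matrix (Fin p) (Fin p) ℝ)
    (I : Fin L → Finset (Fin p)) (hpart : ∀ i : Fin p, ∃! l, i ∈ I l)
    (hcond : ∀ i j : Fin p, ¬ (∃ l, i ∈ I l ∧ j ∈ I l) →
      n₁ * |S₁ i j| ≤ lam₁ + lam₂ / 2 ∧
      n₂ * |S₂ i j| ≤ lam₁ + lam₂ / 2 ∧
      |n₁ * S₁ i j + n₂ * S₂ i j| ≤ 2 * lam₁)
    (Θ₁ Θ₂ : Matrix (Fin p) (Fin p) ℝ) (hΘ₁ : Θ₁.PosDef) (hΘ₂ : Θ₂.PosDef)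
    (hmin : ∀ A B : Matrix (Fin p) (Fin p) ℝ, A.PosDef → B.PosDef →
      pnjglObj2 1 n₁ n₂ lam₁ lam₂ S₁ S₂ Θ₁ Θ₂
        ≤ pnjglObj2 1 n₁ n₂ lam₁ lam₂ S₁ S₂ A B) :
    ∀ i j : Fin p, ¬ (∃ l, i ∈ I l ∧ j ∈ I l) → Θ₁ i j = 0 ∧ Θ₂ i j = 0 := by
  choose b hb using fun i => (hpart i).exists
  have hblock : ∀ i j, (∃ l, i ∈ I l ∧ j ∈ I l) ↔ b i = b j := fun i j =>
    ⟨fun ⟨l, hi, hj⟩ => ((hpart i).unique (hb i) hi).trans ((hpart j).unique (hb j) hj).symm,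
      fun h => ⟨b i, hb i, h ▸ hb j⟩⟩
  have hdrop := pnjglObj2_one_blockRestrict_add_le b hn₁.le hn₂.le hlam₂
    (fun i j hij => hcond i j ((hblock i j).not.mpr hij))
    (isHermitian_iff_isSymm.mp hΘ₁.1) (isHermitian_iff_isSymm.mp hΘ₂.1)
  have hopt := hmin _ _ (hΘ₁.blockRestrict b) (hΘ₂.blockRestrict b)
  have hgain₁ := mul_nonneg hn₁.le (sub_nonneg.mpr (hΘ₁.log_det_le_log_det_blockRestrict b))
  have hgain₂ := mul_nonneg hn₂.le (sub_nonneg.mpr (hΘ₂.log_det_le_log_det_blockRestrict b))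
  have hfix₁ : blockRestrict b Θ₁ = Θ₁ :=
    hΘ₁.blockRestrict_eq_of_log_det_blockRestrict_le b <|
      sub_nonpos.mp (nonpos_of_mul_nonpos_right (by linarith) hn₁)
  have hfix₂ : blockRestrict b Θ₂ = Θ₂ :=
    hΘ₂.blockRestrict_eq_of_log_det_blockRestrict_le b <|
      sub_nonpos.mp (nonpos_of_mul_nonpos_right (by linarith) hn₂)
  intro i j hij
  rw [← hfix₁, ← hfix₂]
  simp [(hblock i j).not.mp hij]

/-- Theorem 3, sufficiency of the necessary conditions when q = 1
and K = 2: if for every (i,j) ∈ T^c we have n₁|S¹_{ij}| ≤ λ₁ + λ₂/2,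
n₂|S²_{ij}| ≤ λ₁ + λ₂/2 and |n₁S¹_{ij} + n₂S²_{ij}| ≤ 2λ₁, then every pair of
symmetric positive definite minimizers of the PNJGL objective with q = 1 is
supported on T. -/
theorem pnjgl_sufficient_q_one (p L : ℕ)
    (n₁ n₂ : ℝ) (hn₁ : 0 < n₁) (hn₂ : 0 < n₂)
    (lam₁ lam₂ : ℝ) (hlam₁ : 0 ≤ lam₁) (hlam₂ : 0 ≤ lam₂)
    (S₁ S₂ : Matrix (Fin p) (Fin p) ℝ) (hS₁ : S₁.IsSymm) (hS₂ : S₂.IsSymm)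
    (I : Fin L → Finset (Fin p)) (hpart : ∀ i : Fin p, ∃! l, i ∈ I l)
    (hcond : ∀ i j : Fin p, ¬ (∃ l, i ∈ I l ∧ j ∈ I l) →
      n₁ * |S₁ i j| ≤ lam₁ + lam₂ / 2 ∧
      n₂ * |S₂ i j| ≤ lam₁ + lam₂ / 2 ∧
      |n₁ * S₁ i j + n₂ * S₂ i j| ≤ 2 * lam₁)
    (Θ₁ Θ₂ : Matrix (Fin p) (Fin p) ℝ) (hΘ₁ : Θ₁.PosDef) (hΘ₂ : Θ₂.PosDef)
    (hmin : ∀ A B : Matrix (Fin p) (Fin p) ℝ, A.PosDef → B.PosDef →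
      pnjglObj2 1 n₁ n₂ lam₁ lam₂ S₁ S₂ Θ₁ Θ₂
        ≤ pnjglObj2 1 n₁ n₂ lam₁ lam₂ S₁ S₂ A B) :
    ∀ i j : Fin p, ¬ (∃ l, i ∈ I l ∧ j ∈ I l) → Θ₁ i j = 0 ∧ Θ₂ i j = 0 :=
  pnjgl_sufficient_q_one_general p L n₁ n₂ hn₁ hn₂ lam₁ lam₂ hlam₂ S₁ S₂ I hpart hcond Θ₁ Θ₂ hΘ₁ hΘ₂
    hmin
end
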